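/- Fix m ≥ 2 and a hierarchy S of size m, let H^{(m)}_n denote the number of isomorphism classes of hierarchies of size n containing no subhierarchy isomorphic to S, and let ρ_m be the radius of convergence of the real power series H^{(m)}(x) = Σ_{n≥1} H^{(m)}_n xⁿ. Then the series Σ_{n≥1} H^{(m)}_n ρ_mⁿ converges, and the left-hand limit lim_{x→ρ_m⁻} H^{(m)}(x) exists and equals Σ_{n≥1} H^{(m)}_n ρ_mⁿ. -/

import Mathlib

/-!
Graft two avoiding hierarchies of sizes `a` and `b` under a new binary root: the result has size
`a + b`, and it avoids `S` as long as `a + b ≠ m`. Up to swapping the two subtrees, a hierarchy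
arises from at most one such grafting, so `∑_{a+b=n} H_a H_b ≤ 2 H_n` for `n ≠ m`. Squaring the
series then gives `H(x)² ≤ 2 H(x) + C xᵐ` on `[0, ρ)`, so `H` stays bounded there. Because the
coefficients are nonnegative, the series converges at `ρ`, and Abel's theorem gives the one-sided
limit. The radius is finite, since `H_n ≥ 1` for every `n ≠ m`.
-/

/-- Finite rooted unordered trees, presented with an ordered list of children
(unorderedness is taken care of by the isomorphism relation `RTree.Iso`). -/
inductive RTree : Type
  | node : List RTree → RTree

/-- The number of leaves (external vertices) of a rooted tree: the *size* of a hierarchy. -/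
def RTree.leaves : RTree → ℕ
  | .node [] => 1
  | .node (a :: l) => ((a :: l).attach.map (fun x => RTree.leaves x.1)).sum
decreasing_by
  have := List.sizeOf_lt_of_mem x.2
  simp only [RTree.node.sizeOf_spec]
  omega

/-- A hierarchy: a rooted tree in which no vertex has exactly one child. -/
inductive RTree.IsHierarchy : RTree → Prop
  | node {l : List RTree} : l.length ≠ 1 → (∀ t ∈ l, RTree.IsHierarchy t) →
      RTree.IsHierarchy (.node l)

/-- `s.SubtreeOf t` : `s` is the subtree of `t` rooted at some vertex of `t`
(that vertex together with all of its descendants). -/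
inductive RTree.SubtreeOf : RTree → RTree → Prop
  | refl (t : RTree) : RTree.SubtreeOf t t
  | child {s c : RTree} {l : List RTree} : c ∈ l → RTree.SubtreeOf s c →
      RTree.SubtreeOf s (.node l)

/-- Isomorphism of rooted unordered trees: the children of the two roots can be
matched up bijectively by isomorphisms. -/
inductive RTree.Iso : RTree → RTree → Prop
  | node {l₁ l l₂ : List RTree} (h₁ : List.Forall₂ RTree.Iso l₁ l) (h₂ : l.Perm l₂) :
      RTree.Iso (.node l₁) (.node l₂)

/-- The number of isomorphism classes of hierarchies of size `n` (OEIS A000669). -/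
noncomputable def hierarchyCount (n : ℕ) : ℕ :=
  Nat.card (Quot fun a b : {t : RTree // t.IsHierarchy ∧ t.leaves = n} => RTree.Iso a.1 b.1)

/-- `t` contains no subhierarchy isomorphic to `S`. -/
def RTree.Avoids (t S : RTree) : Prop :=
  ∀ s : RTree, s.SubtreeOf t → ¬ RTree.Iso s S

/-- The number of isomorphism classes of hierarchies of size `n` containing
no subhierarchy isomorphic to `S`. -/
noncomputable def avoidCount (S : RTree) (n : ℕ) : ℕ :=
  Nat.card (Quot fun a b : {t : RTree // t.IsHierarchy ∧ t.leaves = n ∧ t.Avoids S} =>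
    RTree.Iso a.1 b.1)

/-- The radius of convergence of the real power series `∑ₙ aₙ xⁿ`. -/
noncomputable def radiusOf (a : ℕ → ℝ) : ENNReal :=
  (FormalMultilinearSeries.ofScalars ℝ a).radius

open Filter Finset Topology

theorem List.Forall₂.trans_of_imp {α β γ : Type*} {R : α → β → Prop} {S : β → γ → Prop}
    {T : α → γ → Prop} (H : ∀ a b c, R a b → S b c → T a c) :
    ∀ {l₁ l₂ l₃}, List.Forall₂ R l₁ l₂ → List.Forall₂ S l₂ l₃ → List.Forall₂ T l₁ l₃
  | _, _, _, .nil, .nil => .nil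
  | _, _, _, .cons h₁ h₁', .cons h₂ h₂' => .cons (H _ _ _ h₁ h₂) (trans_of_imp H h₁' h₂')

theorem List.finite_length_le_of_forall_mem {α : Type*} {s : Set α} (hs : s.Finite) (n : ℕ) :
    {l : List α | l.length ≤ n ∧ ∀ x ∈ l, x ∈ s}.Finite := by
  have := hs.to_subtype
  refine ((List.finite_length_le s n).image (List.map Subtype.val)).subset ?_
  rintro l ⟨hn, hl⟩
  lift l to List s using hl
  exact ⟨l, by simpa using hn, rfl⟩

theorem Nat.card_le_two_mul_of_eq_or_eq {α β : Type*} [Finite α] [Finite β] (f : α → β)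
    (g : α → α) (h : ∀ x y, f x = f y → y = x ∨ y = g x) : Nat.card α ≤ 2 * Nat.card β := by
  classical
  cases nonempty_fintype α
  cases nonempty_fintype β
  simp only [Nat.card_eq_fintype_card]
  refine Finset.card_le_mul_card_image_of_maps_to (f := f) (s := Finset.univ)
    (t := Finset.univ) (fun _ _ => Finset.mem_univ _) 2 fun b _ => ?_
  rcases (Finset.univ.filter (f · = b)).eq_empty_or_nonempty with he | ⟨x, hx⟩
  · simp [he]
  refine (Finset.card_le_card (t := {x, g x}) fun y hy => ?_).trans Finset.card_le_two
  simp only [Finset.mem_filter, Finset.mem_univ, true_and] at hx hy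
  rcases h x y (hx.trans hy.symm) with rfl | rfl <;> simp

namespace RTree

@[elab_as_elim]
theorem ind {P : RTree → Prop} (node : ∀ l, (∀ t ∈ l, P t) → P (.node l)) : ∀ t, P t
  | .node l => node l fun t _ => ind node t

@[simp]
theorem leaves_nil : (node []).leaves = 1 := by
  rw [leaves]

theorem leaves_node {l : List RTree} (hl : l ≠ []) : (node l).leaves = (l.map leaves).sum := by
  obtain ⟨a, l, rfl⟩ := List.exists_cons_of_ne_nil hl
  rw [leaves, List.attach_map_val]

theorem leaves_pair (t₁ t₂ : RTree) : (node [t₁, t₂]).leaves = t₁.leaves + t₂.leaves := by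
  simp [leaves_node]

theorem one_le_leaves (t : RTree) : 1 ≤ t.leaves := by
  induction t using RTree.ind with
  | node l ih =>
    rcases l with _ | ⟨a, l⟩
    · simp
    · rw [leaves_node (List.cons_ne_nil a l), List.map_cons, List.sum_cons]
      exact (ih a List.mem_cons_self).trans (Nat.le_add_right _ _)

theorem Iso.refl (t : RTree) : Iso t t := by
  induction t using RTree.ind with
  | node l ih => exact .node (List.forall₂_same.2 ih) (.refl l)

theorem iso_node_of_perm_of_forall₂ {l₁ l l₂ : List RTree} (hp : l₁.Perm l)
    (hf : List.Forall₂ Iso l l₂) : Iso (node l₁) (node l₂) :=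
  let ⟨_, hf', hp'⟩ := List.perm_comp_forall₂ hp hf
  .node hf' hp'

theorem Iso.symm {s t : RTree} (h : Iso s t) : Iso t s := by
  induction s using RTree.ind generalizing t with
  | node l₁ ih =>
    rcases h with @⟨_, l, l₂, hf, hp⟩
    have hf' : List.Forall₂ Iso l l₁ :=
      List.Forall₂.flip (((List.forall₂_and_left _ _).2 ⟨ih, hf⟩).imp fun _ _ h => h.1 h.2)
    exact iso_node_of_perm_of_forall₂ hp.symm hf'

theorem Iso.trans {s t u : RTree} (h₁ : Iso s t) (h₂ : Iso t u) : Iso s u := by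
  induction s using RTree.ind generalizing t u with
  | node l₁ ih =>
    rcases h₁ with @⟨_, l, l₂, hf₁, hp₁⟩
    rcases h₂ with @⟨_, l', l₃, hf₂, hp₂⟩
    obtain ⟨l'', hf, hp⟩ := List.perm_comp_forall₂ hp₁ hf₂
    refine .node (((List.forall₂_and_left _ _).2 ⟨ih, hf₁⟩).trans_of_imp
      (fun _ _ _ h h' => h.1 h.2 h') hf) (hp.trans hp₂)

theorem iso_equivalence : Equivalence Iso :=
  ⟨Iso.refl, Iso.symm, Iso.trans⟩

theorem Iso.leaves_eq {s t : RTree} (h : Iso s t) : s.leaves = t.leaves := by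
  induction s using RTree.ind generalizing t with
  | node l₁ ih =>
    rcases h with @⟨_, l, l₂, hf, hp⟩
    have hmap : l₁.map leaves = l.map leaves := by
      rw [← List.forall₂_eq_eq_eq, List.forall₂_map_left_iff, List.forall₂_map_right_iff]
      exact ((List.forall₂_and_left _ _).2 ⟨ih, hf⟩).imp fun _ _ h => h.1 h.2
    rcases l₁ with _ | ⟨a, l₁⟩
    · cases hf
      rw [← hp.nil_eq]
    · have hl₂ : l₂ ≠ [] := by
        rintro rfl
        cases hf
        exact List.cons_ne_nil _ _ hp.eq_nil
      rw [leaves_node (List.cons_ne_nil a l₁), leaves_node hl₂, hmap, (hp.map leaves).sum_eq]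

theorem iso_pair {t₁ t₂ u₁ u₂ : RTree} (h : Iso (node [t₁, t₂]) (node [u₁, u₂])) :
    Iso t₁ u₁ ∧ Iso t₂ u₂ ∨ Iso t₁ u₂ ∧ Iso t₂ u₁ := by
  rcases h with @⟨_, l, _, hf, hp⟩
  rcases hf with _ | ⟨h₁, _ | ⟨h₂, ⟨⟩⟩⟩
  rcases List.perm_pair.1 hp with h | h <;> simp only [List.cons.injEq] at h
  · exact .inl ⟨h.1 ▸ h₁, h.2.1 ▸ h₂⟩
  · exact .inr ⟨h.1 ▸ h₁, h.2.1 ▸ h₂⟩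

theorem length_le_leaves (l : List RTree) : l.length ≤ (node l).leaves := by
  rcases eq_or_ne l [] with rfl | hl
  · simp
  · rw [leaves_node hl, ← List.length_map (f := leaves)]
    exact List.length_le_sum_of_one_le _ (by simpa using fun t _ => one_le_leaves t)

theorem leaves_lt_of_mem {l : List RTree} (hl : 2 ≤ l.length) {c : RTree} (hc : c ∈ l) :
    c.leaves < (node l).leaves := by
  classical
  have hrest : 1 ≤ ((l.erase c).map leaves).sum := by
    refine le_trans ?_ (List.length_le_sum_of_one_le _ (by simpa using fun t _ => one_le_leaves t))
    rw [List.length_map, List.length_erase_of_mem hc]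
    omega
  rw [leaves_node (List.ne_nil_of_mem hc), ← List.sum_map_erase leaves hc]
  omega

theorem finite_setOf_isHierarchy_leaves_le (n : ℕ) :
    {t : RTree | t.IsHierarchy ∧ t.leaves ≤ n}.Finite := by
  induction n with
  | zero =>
    convert Set.finite_empty
    ext t
    simpa using fun _ => Nat.one_le_iff_ne_zero.1 (one_le_leaves t)
  | succ n ih =>
    refine (((List.finite_length_le_of_forall_mem ih (n + 1)).image node).insert
      (node [])).subset ?_
    rintro ⟨l⟩ ⟨⟨hlen, hch⟩, hle⟩
    rcases eq_or_ne l [] with rfl | hl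
    · exact Set.mem_insert _ _
    have h2 : 2 ≤ l.length := by
      have := List.length_pos_of_ne_nil hl
      omega
    refine Or.inr ⟨l, ⟨(length_le_leaves l).trans hle, fun c hc => ⟨hch c hc, ?_⟩⟩, rfl⟩
    have := leaves_lt_of_mem h2 hc
    omega

theorem avoids_node_iff {l : List RTree} {S : RTree} :
    (node l).Avoids S ↔ ¬Iso (node l) S ∧ ∀ c ∈ l, c.Avoids S := by
  refine ⟨fun h => ⟨h _ (.refl _), fun c hc s hs => h s (.child hc hs)⟩, ?_⟩
  rintro ⟨hroot, hch⟩ s (_ | ⟨hc, hs⟩)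
  · exact hroot
  · exact hch _ hc s hs

theorem not_iso_of_leaves_ne {t S : RTree} (h : t.leaves ≠ S.leaves) : ¬Iso t S :=
  fun hi => h hi.leaves_eq

theorem isHierarchy_leaf : (node []).IsHierarchy :=
  .node (by simp) (by simp)

theorem leaf_avoids {S : RTree} (hS : S.leaves ≠ 1) : (node []).Avoids S :=
  avoids_node_iff.2 ⟨not_iso_of_leaves_ne (by simpa using hS.symm), by simp⟩

theorem exists_isHierarchy_avoids {S : RTree} (hS : S.leaves ≠ 1) {n : ℕ} (hn : 1 ≤ n)
    (hnS : n ≠ S.leaves) : ∃ t : RTree, t.IsHierarchy ∧ t.leaves = n ∧ t.Avoids S := by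
  rcases hn.eq_or_lt with rfl | hn
  · exact ⟨node [], isHierarchy_leaf, leaves_nil, leaf_avoids hS⟩
  set star := node (List.replicate n (node []))
  have hleaves : star.leaves = n := by
    simp [star, leaves_node (List.ne_nil_of_length_pos (l := List.replicate n (node []))
      (by simp; omega))]
  refine ⟨star, .node (by simp; omega) fun t ht => ?_, hleaves,
    avoids_node_iff.2 ⟨not_iso_of_leaves_ne (hleaves.trans_ne hnS), fun t ht => ?_⟩⟩
  · exact List.eq_of_mem_replicate ht ▸ isHierarchy_leaf
  · exact List.eq_of_mem_replicate ht ▸ leaf_avoids hS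

theorem isHierarchy_pair {t₁ t₂ : RTree} (h₁ : t₁.IsHierarchy) (h₂ : t₂.IsHierarchy) :
    (node [t₁, t₂]).IsHierarchy :=
  .node (by simp) (by simp [h₁, h₂])

theorem avoids_pair {t₁ t₂ S : RTree} (h : t₁.leaves + t₂.leaves ≠ S.leaves)
    (h₁ : t₁.Avoids S) (h₂ : t₂.Avoids S) : (node [t₁, t₂]).Avoids S :=
  avoids_node_iff.2 ⟨not_iso_of_leaves_ne (by rwa [leaves_pair]), by simp [h₁, h₂]⟩

theorem Iso.pair {t₁ t₂ u₁ u₂ : RTree} (h₁ : Iso t₁ u₁) (h₂ : Iso t₂ u₂) :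
    Iso (.node [t₁, t₂]) (.node [u₁, u₂]) :=
  .node (.cons h₁ (.cons h₂ .nil)) (.refl _)

abbrev AvoidingClass (S : RTree) (n : ℕ) : Type :=
  Quot fun a b : {t : RTree // t.IsHierarchy ∧ t.leaves = n ∧ t.Avoids S} => Iso a.1 b.1

namespace AvoidingClass

variable {S : RTree} {n : ℕ}

theorem card_eq_avoidCount : Nat.card (AvoidingClass S n) = avoidCount S n := rfl

instance : Finite (AvoidingClass S n) :=
  have : Finite {t : RTree // t.IsHierarchy ∧ t.leaves = n ∧ t.Avoids S} :=
    ((finite_setOf_isHierarchy_leaves_le n).subset fun _ ht => ⟨ht.1, ht.2.1.le⟩).to_subtype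
  Quot.finite _

theorem mk_eq_mk_iff {a b : {t : RTree // t.IsHierarchy ∧ t.leaves = n ∧ t.Avoids S}} :
    (Quot.mk _ a : AvoidingClass S n) = Quot.mk _ b ↔ Iso a.1 b.1 :=
  Quot.eq.trans ((iso_equivalence.comap Subtype.val).eqvGen_iff)

def graft {a b : ℕ} (hab : a + b = n) (hn : n ≠ S.leaves) :
    AvoidingClass S a → AvoidingClass S b → AvoidingClass S n :=
  Quot.map₂
    (fun t₁ t₂ => ⟨node [t₁.1, t₂.1], isHierarchy_pair t₁.2.1 t₂.2.1,
      by rw [leaves_pair, t₁.2.2.1, t₂.2.2.1, hab],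
      avoids_pair (by rwa [t₁.2.2.1, t₂.2.2.1, hab]) t₁.2.2.2 t₂.2.2.2⟩)
    (fun t₁ _ _ h => (Iso.refl t₁.1).pair h) (fun _ _ t₂ h => h.pair (Iso.refl t₂.1))

end AvoidingClass

abbrev AvoidingPair (S : RTree) (n : ℕ) : Type :=
  Σ p : antidiagonal n, AvoidingClass S p.1.1 × AvoidingClass S p.1.2

namespace AvoidingPair

variable {S : RTree} {n : ℕ}

theorem card_eq_sum :
    Nat.card (AvoidingPair S n) = ∑ p ∈ antidiagonal n, avoidCount S p.1 * avoidCount S p.2 := by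
  rw [Nat.card_sigma]
  simp only [Nat.card_prod, AvoidingClass.card_eq_avoidCount]
  exact sum_coe_sort _ fun p : ℕ × ℕ => avoidCount S p.1 * avoidCount S p.2

def swap (x : AvoidingPair S n) : AvoidingPair S n :=
  ⟨⟨x.1.1.swap, HasAntidiagonal.swap_mem_antidiagonal.2 x.1.2⟩, x.2.2, x.2.1⟩

def graft (hn : n ≠ S.leaves) (x : AvoidingPair S n) : AvoidingClass S n :=
  AvoidingClass.graft (mem_antidiagonal.1 x.1.2) hn x.2.1 x.2.2

theorem eq_or_eq_swap_of_graft_eq (hn : n ≠ S.leaves) {x y : AvoidingPair S n}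
    (h : x.graft hn = y.graft hn) : y = x ∨ y = x.swap := by
  obtain ⟨⟨⟨a, b⟩, hab⟩, q₁, q₂⟩ := x
  obtain ⟨⟨⟨c, d⟩, hcd⟩, r₁, r₂⟩ := y
  induction q₁ using Quot.ind with | mk t₁ => ?_
  induction q₂ using Quot.ind with | mk t₂ => ?_
  induction r₁ using Quot.ind with | mk u₁ => ?_
  induction r₂ using Quot.ind with | mk u₂ => ?_
  rcases iso_pair (AvoidingClass.mk_eq_mk_iff.1 h) with ⟨h₁, h₂⟩ | ⟨h₁, h₂⟩
  · obtain rfl : c = a := u₁.2.2.1.symm.trans (h₁.leaves_eq.symm.trans t₁.2.2.1)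
    obtain rfl : d = b := u₂.2.2.1.symm.trans (h₂.leaves_eq.symm.trans t₂.2.2.1)
    left
    simp only [Sigma.mk.injEq, heq_eq_eq, Prod.mk.injEq, true_and]
    exact ⟨AvoidingClass.mk_eq_mk_iff.2 h₁.symm, AvoidingClass.mk_eq_mk_iff.2 h₂.symm⟩
  · obtain rfl : c = b := u₁.2.2.1.symm.trans (h₂.leaves_eq.symm.trans t₂.2.2.1)
    obtain rfl : d = a := u₂.2.2.1.symm.trans (h₁.leaves_eq.symm.trans t₁.2.2.1)
    right
    simp only [swap, Sigma.mk.injEq, heq_eq_eq, Prod.mk.injEq]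
    exact ⟨rfl, AvoidingClass.mk_eq_mk_iff.2 h₂.symm, AvoidingClass.mk_eq_mk_iff.2 h₁.symm⟩

end AvoidingPair

theorem sum_antidiagonal_avoidCount_mul_le {S : RTree} {n : ℕ} (hn : n ≠ S.leaves) :
    ∑ p ∈ antidiagonal n, avoidCount S p.1 * avoidCount S p.2 ≤ 2 * avoidCount S n := by
  rw [← AvoidingPair.card_eq_sum, ← AvoidingClass.card_eq_avoidCount]
  exact Nat.card_le_two_mul_of_eq_or_eq _ AvoidingPair.swap
    fun _ _ => AvoidingPair.eq_or_eq_swap_of_graft_eq hn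

theorem avoidCount_zero (S : RTree) : avoidCount S 0 = 0 := by
  have : IsEmpty {t : RTree // t.IsHierarchy ∧ t.leaves = 0 ∧ t.Avoids S} :=
    ⟨fun t => by have := one_le_leaves t.1; omega⟩
  rw [← AvoidingClass.card_eq_avoidCount]
  exact Nat.card_of_isEmpty

theorem avoidCount_pos {S : RTree} (hS : S.leaves ≠ 1) {n : ℕ} (hn : 1 ≤ n) (hnS : n ≠ S.leaves) :
    0 < avoidCount S n := by
  obtain ⟨t, ht⟩ := exists_isHierarchy_avoids hS hn hnS
  have : Nonempty (AvoidingClass S n) := ⟨Quot.mk _ ⟨t, ht⟩⟩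
  rw [← AvoidingClass.card_eq_avoidCount]
  exact Nat.card_pos

end RTree

section RadiusOf

variable {a : ℕ → ℝ}

theorem summable_mul_pow_of_enorm_lt_radiusOf {x : ℝ} (hx : ‖x‖ₑ < radiusOf a) :
    Summable fun n => a n * x ^ n := by
  refine Summable.of_norm ?_
  have := (FormalMultilinearSeries.ofScalars ℝ a).summable_norm_mul_pow (r := ‖x‖₊) hx
  simpa [FormalMultilinearSeries.ofScalars_norm, norm_mul, norm_pow] using this

theorem summable_mul_pow_of_abs_lt_toReal_radiusOf {x : ℝ} (hx : |x| < (radiusOf a).toReal) :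
    Summable fun n => a n * x ^ n := by
  refine summable_mul_pow_of_enorm_lt_radiusOf ?_
  rcases eq_or_ne (radiusOf a) ⊤ with h | h
  · simp [h]
  · rw [Real.enorm_eq_ofReal_abs]
    exact (ENNReal.ofReal_lt_iff_lt_toReal (abs_nonneg x) h).2 hx

theorem enorm_le_radiusOf_of_summable {x : ℝ} (h : Summable fun n => a n * x ^ n) :
    ‖x‖ₑ ≤ radiusOf a :=
  (FormalMultilinearSeries.ofScalars ℝ a).le_radius_of_summable (r := ‖x‖₊)
    (by simpa [FormalMultilinearSeries.ofScalars_norm, abs_mul] using h.abs)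

theorem radiusOf_le_one_of_not_tendsto_zero (h : ¬Tendsto a atTop (𝓝 0)) : radiusOf a ≤ 1 := by
  by_contra! h1
  have := summable_mul_pow_of_enorm_lt_radiusOf (x := 1) (by simpa using h1)
  exact h (by simpa using this.tendsto_atTop_zero)

theorem tendsto_tsum_mul_pow_nhdsLT {R : ℝ} (hR : 0 < R) (h : Summable fun n => a n * R ^ n) :
    Tendsto (fun x => ∑' n, a n * x ^ n) (𝓝[<] R) (𝓝 (∑' n, a n * R ^ n)) := by
  have habel := Real.tendsto_tsum_powerSeries_nhdsWithin_lt h.hasSum.tendsto_sum_nat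
  have hscale : Tendsto (fun x => x / R) (𝓝[<] R) (𝓝[<] 1) := by
    refine tendsto_nhdsWithin_of_tendsto_nhds_of_eventually_within _ ?_ ?_
    · simpa [hR.ne'] using ((continuous_id.div_const R).tendsto R).mono_left nhdsWithin_le_nhds
    · filter_upwards [self_mem_nhdsWithin] with x hx
      exact (div_lt_one hR).2 hx
  refine (habel.comp hscale).congr fun x => tsum_congr fun n => ?_
  simp only [div_pow]
  field_simp

theorem tendsto_tsum_mul_pow_nhdsLT_zero_of_radiusOf_eq_zero (h : radiusOf a = 0) :
    Tendsto (fun x => ∑' n, a n * x ^ n) (𝓝[<] 0) (𝓝 0) := by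
  refine tendsto_const_nhds.congr' ?_
  filter_upwards [self_mem_nhdsWithin] with x hx
  -- the series diverges at `x < 0`, so its `tsum` is the junk value `0`
  refine (tsum_eq_zero_of_not_summable fun hs => ?_).symm
  have := enorm_le_radiusOf_of_summable hs
  rw [h, nonpos_iff_eq_zero, enorm_eq_zero] at this
  exact hx.ne this

theorem summable_mul_pow_of_tsum_le {R B : ℝ} (ha : ∀ n, 0 ≤ a n) (hR : 0 < R)
    (hs : ∀ x ∈ Set.Ioo 0 R, Summable fun n => a n * x ^ n)
    (hB : ∀ x ∈ Set.Ioo 0 R, ∑' n, a n * x ^ n ≤ B) :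
    Summable fun n => a n * R ^ n := by
  refine summable_of_sum_range_le (c := B) (fun n => mul_nonneg (ha n) (pow_nonneg hR.le n))
    fun N => ?_
  have hcont : Continuous fun x : ℝ => ∑ n ∈ range N, a n * x ^ n := by fun_prop
  refine le_of_tendsto ((hcont.tendsto R).mono_left (nhdsWithin_le_nhds (s := Set.Iio R))) ?_
  filter_upwards [Ioo_mem_nhdsLT hR] with x hx
  exact ((hs x hx).sum_le_tsum _ fun n _ => mul_nonneg (ha n) (pow_nonneg hx.1.le n)).trans
    (hB x hx)

theorem sq_tsum_mul_pow_le {m : ℕ} (ha : ∀ n, 0 ≤ a n)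
    (hconv : ∀ n ≠ m, ∑ p ∈ antidiagonal n, a p.1 * a p.2 ≤ 2 * a n) {x : ℝ} (hx : 0 ≤ x)
    (hs : Summable fun n => a n * x ^ n) :
    (∑' n, a n * x ^ n) ^ 2 ≤
      2 * ∑' n, a n * x ^ n + (∑ p ∈ antidiagonal m, a p.1 * a p.2) * x ^ m := by
  set c := fun n => ∑ p ∈ antidiagonal n, a p.1 * a p.2
  have hterm : ∀ n, 0 ≤ a n * x ^ n := fun n => mul_nonneg (ha n) (pow_nonneg hx n)
  have hsn : Summable fun n => ‖a n * x ^ n‖ := by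
    simpa only [Real.norm_of_nonneg (hterm _)] using hs
  have hcauchy : ∀ n, ∑ p ∈ antidiagonal n, a p.1 * x ^ p.1 * (a p.2 * x ^ p.2) = c n * x ^ n := by
    intro n
    rw [Finset.sum_mul]
    refine sum_congr rfl fun p hp => ?_
    rw [← mem_antidiagonal.1 hp, pow_add]
    ring
  have hsq : HasSum (fun n => c n * x ^ n) ((∑' n, a n * x ^ n) ^ 2) := by
    rw [sq, tsum_mul_tsum_eq_tsum_sum_antidiagonal_of_summable_norm hsn hsn]
    simp only [hcauchy]
    exact ((summable_norm_sum_mul_antidiagonal_of_summable_norm hsn hsn).of_norm.congr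
      hcauchy).hasSum
  have hbound : HasSum (fun n => 2 * (a n * x ^ n) + if n = m then c m * x ^ m else 0)
      (2 * ∑' n, a n * x ^ n + c m * x ^ m) :=
    (hs.hasSum.mul_left 2).add (hasSum_ite_eq m _)
  refine hasSum_le (fun n => ?_) hsq hbound
  by_cases hn : n = m
  · rw [if_pos hn, hn]
    linarith [hterm m]
  · simp only [if_neg hn, add_zero, ← mul_assoc]
    exact mul_le_mul_of_nonneg_right (hconv n hn) (pow_nonneg hx n)

theorem tsum_mul_pow_le_of_antidiagonal_le {m : ℕ} (ha : ∀ n, 0 ≤ a n)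
    (hconv : ∀ n ≠ m, ∑ p ∈ antidiagonal n, a p.1 * a p.2 ≤ 2 * a n) {x R : ℝ} (hx : 0 ≤ x)
    (hxR : x ≤ R) (hs : Summable fun n => a n * x ^ n) :
    ∑' n, a n * x ^ n ≤ 1 + √(1 + (∑ p ∈ antidiagonal m, a p.1 * a p.2) * R ^ m) := by
  set C := ∑ p ∈ antidiagonal m, a p.1 * a p.2
  have hC : 0 ≤ C := sum_nonneg fun p _ => mul_nonneg (ha _) (ha _)
  have hxm : C * x ^ m ≤ C * R ^ m := by gcongr
  -- `y ^ 2 ≤ 2 * y + C` means `(y - 1) ^ 2 ≤ 1 + C`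
  have := Real.abs_le_sqrt (x := ∑' n, a n * x ^ n - 1) (y := 1 + C * R ^ m)
    (by nlinarith [sq_tsum_mul_pow_le ha hconv hx hs])
  linarith [le_abs_self (∑' n, a n * x ^ n - 1)]

theorem summable_and_tendsto_tsum_mul_pow_radiusOf {m : ℕ} (ha : ∀ n, 0 ≤ a n) (ha0 : a 0 = 0)
    (hr : radiusOf a ≠ ⊤) (hconv : ∀ n ≠ m, ∑ p ∈ antidiagonal n, a p.1 * a p.2 ≤ 2 * a n) :
    Summable (fun n => a n * (radiusOf a).toReal ^ n) ∧
      Tendsto (fun x => ∑' n, a n * x ^ n) (𝓝[<] (radiusOf a).toReal)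
        (𝓝 (∑' n, a n * (radiusOf a).toReal ^ n)) := by
  set R := (radiusOf a).toReal
  obtain hR | hR : 0 = R ∨ 0 < R := ENNReal.toReal_nonneg.eq_or_lt
  · have hzero : (fun n => a n * R ^ n) = 0 := by
      funext n
      rcases n with _ | n <;> simp [ha0, ← hR]
    rw [hzero, Pi.zero_def, tsum_zero, ← hR]
    refine ⟨summable_zero, tendsto_tsum_mul_pow_nhdsLT_zero_of_radiusOf_eq_zero ?_⟩
    exact (ENNReal.toReal_eq_zero_iff _).1 hR.symm |>.resolve_right hr
  · have hs : ∀ x ∈ Set.Ioo 0 R, Summable fun n => a n * x ^ n := fun x hx =>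
      summable_mul_pow_of_abs_lt_toReal_radiusOf ((abs_of_pos hx.1).trans_lt hx.2)
    have hsR := summable_mul_pow_of_tsum_le ha hR hs fun x hx =>
      tsum_mul_pow_le_of_antidiagonal_le ha hconv hx.1.le hx.2.le (hs x hx)
    exact ⟨hsR, tendsto_tsum_mul_pow_nhdsLT hR hsR⟩

end RadiusOf

theorem avoiding_series_left_limit_at_radius_general {m : ℕ} (hm : 2 ≤ m) (S : RTree)
    (hSm : S.leaves = m) :
    Summable (fun n => (avoidCount S n : ℝ) *
        ((radiusOf fun n => (avoidCount S n : ℝ)).toReal) ^ n) ∧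
      Filter.Tendsto (fun x : ℝ => ∑' n : ℕ, (avoidCount S n : ℝ) * x ^ n)
        (nhdsWithin ((radiusOf fun n => (avoidCount S n : ℝ)).toReal)
          (Set.Iio ((radiusOf fun n => (avoidCount S n : ℝ)).toReal)))
        (nhds (∑' n : ℕ, (avoidCount S n : ℝ) *
          ((radiusOf fun n => (avoidCount S n : ℝ)).toReal) ^ n)) := by
  have hS1 : S.leaves ≠ 1 := by omega
  have hpos : ∀ n, m < n → 1 ≤ (avoidCount S n : ℝ) := fun n hn =>
    Nat.one_le_cast.2 (RTree.avoidCount_pos hS1 (by omega) (by omega))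
  have hr : radiusOf (fun n => (avoidCount S n : ℝ)) ≠ ⊤ := by
    refine ne_top_of_le_ne_top ENNReal.one_ne_top
      (radiusOf_le_one_of_not_tendsto_zero fun h => ?_)
    obtain ⟨n, hlt, hn⟩ :=
      ((h.eventually (gt_mem_nhds one_pos)).and (eventually_gt_atTop m)).exists
    exact (hpos n hn).not_gt hlt
  refine summable_and_tendsto_tsum_mul_pow_radiusOf (m := m) (fun n => Nat.cast_nonneg _)
    (by simp [RTree.avoidCount_zero]) hr fun n hn => ?_
  exact_mod_cast RTree.sum_antidiagonal_avoidCount_mul_le (hSm ▸ hn)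

/-- For a hierarchy `S` of size `m ≥ 2` with avoiding counts `H⁽ᵐ⁾ₙ` and radius of
convergence `ρₘ`, the series `∑ₙ H⁽ᵐ⁾ₙ ρₘⁿ` converges, and `H⁽ᵐ⁾(x) → ∑ₙ H⁽ᵐ⁾ₙ ρₘⁿ`
as `x → ρₘ⁻`. -/
theorem avoiding_series_left_limit_at_radius {m : ℕ} (hm : 2 ≤ m) (S : RTree)
    (hS : S.IsHierarchy) (hSm : S.leaves = m) :
    Summable (fun n => (avoidCount S n : ℝ) *
        ((radiusOf fun n => (avoidCount S n : ℝ)).toReal) ^ n) ∧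
      Filter.Tendsto (fun x : ℝ => ∑' n : ℕ, (avoidCount S n : ℝ) * x ^ n)
        (nhdsWithin ((radiusOf fun n => (avoidCount S n : ℝ)).toReal)
          (Set.Iio ((radiusOf fun n => (avoidCount S n : ℝ)).toReal)))
        (nhds (∑' n : ℕ, (avoidCount S n : ℝ) *
          ((radiusOf fun n => (avoidCount S n : ℝ)).toReal) ^ n)) :=
  avoiding_series_left_limit_at_radius_general hm S hSm
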